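/- arXiv:2304.00129 — 3 statements merged into one kernel-verified Lean document; each statement's English description precedes it below -/
import Mathlib

section
/- Let η = 1 + k with k ≥ 2, and index η × η real matrices by the sum type Fin 1 ⊕ Fin k. Let M be symmetric (Mᵀ = M). Let m : Fin k → ℝ be given by m j = M (inl 0) (inr j), and suppose w : Fin k → ℝ is a unit vector (Σ_j (w j)² = 1) such that ((1 − 2 · vecMulVec w w) *ᵥ m) j = 0 for all j ≠ 0. Let P = fromBlocks 1 0 0 (1 − 2 · vecMulVec w w). Then T := P * M * Pᵀ satisfies: (i) T is symmetric; (ii) T (inl 0) (inr j) = 0 and T (inr j) (inl 0) = 0 for every j : Fin k with j ≠ 0; (iii) T has the same characteristic polynomial as M. -/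
open Matrix

/-- Correctness of one tridiagonalization step of the encrypted
eigendecomposition: conjugating a symmetric matrix `M` by the block
Householder matrix `P` zeroes the first row and column beyond the
sub/super-diagonal entry, preserves symmetry and the characteristic
polynomial. -/
theorem stmt_5 (k : ℕ) (hk : 2 ≤ k)
    (M : Matrix (Fin 1 ⊕ Fin k) (Fin 1 ⊕ Fin k) ℝ) (hM : Mᵀ = M)
    (m : Fin k → ℝ) (hm : ∀ j : Fin k, m j = M (Sum.inl 0) (Sum.inr j))
    (w : Fin k → ℝ) (hw : ∑ j, (w j) ^ 2 = 1)
    (hzero : ∀ j : Fin k, j ≠ ⟨0, by omega⟩ →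
      (((1 : Matrix (Fin k) (Fin k) ℝ) - (2 : ℝ) • Matrix.vecMulVec w w) *ᵥ m) j = 0)
    (P : Matrix (Fin 1 ⊕ Fin k) (Fin 1 ⊕ Fin k) ℝ)
    (hP : P = Matrix.fromBlocks 1 0 0
      ((1 : Matrix (Fin k) (Fin k) ℝ) - (2 : ℝ) • Matrix.vecMulVec w w))
    (T : Matrix (Fin 1 ⊕ Fin k) (Fin 1 ⊕ Fin k) ℝ) (hT : T = P * M * Pᵀ) :
    Tᵀ = T ∧
    (∀ j : Fin k, j ≠ ⟨0, by omega⟩ →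
      T (Sum.inl 0) (Sum.inr j) = 0 ∧ T (Sum.inr j) (Sum.inl 0) = 0) ∧
    T.charpoly = M.charpoly := by
  classical
  set Q : Matrix (Fin k) (Fin k) ℝ := Matrix.vecMulVec w w with hQdef
  set H : Matrix (Fin k) (Fin k) ℝ := 1 - (2 : ℝ) • Q with hHdef
  have hQQ : Q * Q = Q := by
    ext i j
    simp only [hQdef, mul_apply, vecMulVec_apply]
    simp_rw [show ∀ l, (w i * w l) * (w l * w j) = (w i * w j) * w l ^ 2 by intro l; ring,
      ← Finset.mul_sum, hw, mul_one]
  have hHH : H * H = 1 := by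
    simp only [hHdef, sub_mul, mul_sub, one_mul, mul_one, Matrix.smul_mul, Matrix.mul_smul, hQQ]
    module
  have hQT : Qᵀ = Q := by
    ext i j; simp [hQdef, vecMulVec_apply, mul_comm]
  have hHT : Hᵀ = H := by
    simp [hHdef, transpose_sub, transpose_smul, hQT]
  have hPT : Pᵀ = P := by
    rw [hP]; simp [fromBlocks_transpose, hHT]
  have hPP : P * P = 1 := by
    rw [hP, fromBlocks_multiply]
    simp [hHH, ← fromBlocks_one]
  have hTsym : Tᵀ = T := by
    rw [hT, transpose_mul, transpose_mul, transpose_transpose, hM, mul_assoc]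
  have hz : ∀ j : Fin k, T (Sum.inl 0) (Sum.inr j) = (H *ᵥ m) j := by
    intro j
    rw [hT, hP]
    simp only [mul_apply, Fintype.sum_sum_type, fromBlocks_apply₁₁, fromBlocks_apply₁₂,
      fromBlocks_apply₂₁, fromBlocks_apply₂₂, transpose_apply, mulVec, dotProduct]
    simp [hm, Finset.sum_mul, mul_comm, Fin.sum_univ_one]
  refine ⟨hTsym, fun j hj => ?_, ?_⟩
  · have h1 : T (Sum.inl 0) (Sum.inr j) = 0 := by rw [hz j]; exact hzero j hj
    refine ⟨h1, ?_⟩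
    have := congrFun (congrFun hTsym (Sum.inl 0)) (Sum.inr j)
    rw [transpose_apply] at this
    rw [this, h1]
  · -- charpoly
    have hmap : ∀ (A B : Matrix (Fin 1 ⊕ Fin k) (Fin 1 ⊕ Fin k) ℝ),
        (A * B).map (Polynomial.C : ℝ →+* Polynomial ℝ) = A.map Polynomial.C * B.map Polynomial.C :=
      fun A B => Matrix.map_mul
    have hPP' : P.map (Polynomial.C : ℝ →+* Polynomial ℝ) * P.map Polynomial.C = 1 := by
      rw [← hmap, hPP]; simp
    have hchar : charmatrix T = P.map Polynomial.C * charmatrix M * P.map Polynomial.C := by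
      rw [hT, hPT]
      unfold charmatrix
      rw [Matrix.mul_sub, Matrix.sub_mul]
      congr 1
      · rw [scalar_apply, ← smul_one_eq_diagonal, Matrix.mul_smul, mul_one,
          Matrix.smul_mul, hPP']
      · simp only [RingHom.mapMatrix_apply]
        rw [hmap, hmap]
    rw [Matrix.charpoly, Matrix.charpoly, hchar, det_mul, det_mul]
    have : (P.map (Polynomial.C : ℝ →+* Polynomial ℝ)).det *
        (P.map (Polynomial.C : ℝ →+* Polynomial ℝ)).det = 1 := by
      rw [← det_mul, hPP']; simp
    ring_nf
    rw [sq, this, one_mul]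
end

section
/- Let n > 0, let β, γ be positive integers, let m : ZMod n → ℝ, and let d : Fin (β * γ) → (ZMod n → ℝ) be any family of vectors. Writing ρ_a(x)(j) = x(j + a) for the cyclic rotation of x : ZMod n → ℝ by a : ZMod n and ⊙ for the pointwise product, the following baby-step giant-step decomposition holds: Σ_{k : Fin (β*γ)} ρ_k(m) ⊙ d_k = Σ_{g : Fin γ} ρ_{g·β} ( Σ_{y : Fin β} ρ_y(m) ⊙ ρ_{−g·β}(d_{g·β + y}) ), where every index k : Fin (β*γ) is uniquely written as k = g·β + y with g : Fin γ, y : Fin β, and integer rotation amounts are interpreted in ZMod n. -/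
/-- Cyclic rotation of a vector `x : ZMod n → ℝ` by `a`: `(rot a x) j = x (j + a)`. -/
def rot {n : ℕ} (a : ZMod n) (x : ZMod n → ℝ) : ZMod n → ℝ := fun j => x (j + a)

lemma rot_rot {n : ℕ} (a b : ZMod n) (x : ZMod n → ℝ) :
    rot a (rot b x) = rot (b + a) x := by
  funext j; simp [rot, add_assoc, add_comm a b]

lemma rot_zero {n : ℕ} (x : ZMod n → ℝ) : rot (0 : ZMod n) x = x := by
  funext j; simp [rot]

lemma rot_mul {n : ℕ} (a : ZMod n) (x y : ZMod n → ℝ) :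
    rot a (x * y) = rot a x * rot a y := rfl

lemma rot_sum {n : ℕ} {ι : Type*} (s : Finset ι) (a : ZMod n) (f : ι → ZMod n → ℝ) :
    rot a (∑ i ∈ s, f i) = ∑ i ∈ s, rot a (f i) := by
  funext j; simp [rot, Finset.sum_apply]

/-- Correctness of the baby-step giant-step decomposition in the Diagonal
Method (M3): the sum of rotated-row/diagonal products over `β·γ` rotation
amounts can be regrouped using `β` baby steps and `γ` giant steps. -/
theorem stmt_8 (n : ℕ) (hn : 0 < n) (β γ : ℕ) (hβ : 0 < β) (hγ : 0 < γ)
    (m : ZMod n → ℝ) (d : Fin (β * γ) → ZMod n → ℝ) :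
    ∑ k : Fin (β * γ), rot ((k : ℕ) : ZMod n) m * d k =
    ∑ g : Fin γ, rot ((((g : ℕ) * β : ℕ) : ZMod n))
      (∑ y : Fin β, rot ((y : ℕ) : ZMod n) m *
        rot (-((((g : ℕ) * β : ℕ)) : ZMod n))
          (d ⟨(g : ℕ) * β + (y : ℕ), by nlinarith [g.isLt, y.isLt]⟩)) := by
  set e : Fin γ × Fin β ≃ Fin (β * γ) :=
    finProdFinEquiv.trans (finCongr (Nat.mul_comm γ β)) with he
  simp only [rot_sum, rot_mul, rot_rot, neg_add_cancel, rot_zero]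
  rw [← Fintype.sum_prod_type']
  refine (Fintype.sum_equiv e _ _ fun p => ?_).symm
  obtain ⟨g, y⟩ := p
  have hv : ((e (g, y) : Fin (β * γ)) : ℕ) = (g : ℕ) * β + (y : ℕ) := by
    simp [he, finProdFinEquiv]
    ring
  congr 1
  · congr 1
    rw [hv]
    push_cast
    ring
  · apply congrArg
    apply Fin.ext
    simpa using hv.symm
end

section
/- Let K : ℕ, t = 2^K, and x : ℝ. Define a sequence of vectors w_k : ZMod t → ℝ by w_0 i = (if i = 0 then x else 0) and w_{k+1} i = w_k i + w_k (i − 2^k). Then for every k ≤ K and every i : ZMod t, w_k i = x if the canonical representative i.val < 2^k and w_k i = 0 otherwise; in particular w_K is the constant vector with all entries equal to x. -/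
/-- Correctness of the `Dup` operation of SF-PCA: doubling-based duplication
of the first slot of a packed vector of length `t = 2^K` fills the first `2^k`
slots after `k` steps, and fills the whole vector after `K` steps. -/
theorem stmt_10 (K t : ℕ) (ht : t = 2 ^ K) (x : ℝ)
    (w : ℕ → ZMod t → ℝ)
    (hw0 : ∀ i : ZMod t, w 0 i = if i = 0 then x else 0)
    (hws : ∀ (k : ℕ) (i : ZMod t),
      w (k + 1) i = w k i + w k (i - ((2 ^ k : ℕ) : ZMod t))) :
    (∀ k : ℕ, k ≤ K → ∀ i : ZMod t,
      w k i = if i.val < 2 ^ k then x else 0) ∧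
    (∀ i : ZMod t, w K i = x) := by
  subst ht
  haveI : NeZero (2 ^ K) := ⟨by positivity⟩
  have main : ∀ k : ℕ, k ≤ K → ∀ i : ZMod (2 ^ K),
      w k i = if i.val < 2 ^ k then x else 0 := by
    intro k
    induction k with
    | zero =>
      intro _ i
      rw [hw0]
      congr 1
      simp [Nat.lt_one_iff, ZMod.val_eq_zero]
    | succ k ih =>
      intro hk i
      have hk' : k ≤ K := Nat.le_of_succ_le hk
      have h2 : 2 ^ (k + 1) ≤ 2 ^ K := Nat.pow_le_pow_right (by norm_num) hk
      have h2e : 2 ^ (k + 1) = 2 * 2 ^ k := by ring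
      have hc1 : 1 ≤ 2 ^ k := Nat.one_le_two_pow
      have hclt : 2 ^ k < 2 ^ K := by omega
      have hv : i.val < 2 ^ K := ZMod.val_lt i
      have hneg : ((2 ^ K - 2 ^ k : ℕ) : ZMod (2 ^ K)) = -((2 ^ k : ℕ) : ZMod (2 ^ K)) := by
        apply eq_neg_of_add_eq_zero_left
        rw [← Nat.cast_add]
        have : 2 ^ K - 2 ^ k + 2 ^ k = 2 ^ K := by omega
        rw [this, ZMod.natCast_self]
      have hsub : i - ((2 ^ k : ℕ) : ZMod (2 ^ K)) = i + ((2 ^ K - 2 ^ k : ℕ) : ZMod (2 ^ K)) := by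
        rw [hneg]; ring
      have hval : (i - ((2 ^ k : ℕ) : ZMod (2 ^ K))).val
          = (i.val + (2 ^ K - 2 ^ k)) % 2 ^ K := by
        rw [hsub, ZMod.val_add, ZMod.val_natCast,
          Nat.mod_eq_of_lt (show 2 ^ K - 2 ^ k < 2 ^ K by omega)]
      rw [hws, ih hk', ih hk']
      rcases lt_or_ge i.val (2 ^ k) with h | h
      · have hval' : (i - ((2 ^ k : ℕ) : ZMod (2 ^ K))).val = i.val + (2 ^ K - 2 ^ k) := by
          rw [hval, Nat.mod_eq_of_lt (by omega)]
        rw [if_pos h, if_neg (by omega), if_pos (by omega)]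
        ring
      · have hval' : (i - ((2 ^ k : ℕ) : ZMod (2 ^ K))).val = i.val - 2 ^ k := by
          rw [hval]
          have he : i.val + (2 ^ K - 2 ^ k) = 2 ^ K + (i.val - 2 ^ k) := by omega
          rw [he, Nat.add_mod_left, Nat.mod_eq_of_lt (by omega)]
        rw [if_neg (by omega), hval']
        rcases lt_or_ge i.val (2 ^ (k + 1)) with h' | h'
        · rw [if_pos (by omega), if_pos h']; ring
        · rw [if_neg (by omega), if_neg (by omega)]; ring
  refine ⟨main, fun i => ?_⟩
  rw [main K le_rfl i, if_pos (ZMod.val_lt i)]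
end
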